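/- arXiv:2507.11817 — 5 statements merged into one kernel-verified Lean document; each statement's English description precedes it below -/
import Mathlib

section
/- If G is a triangle-free non-bipartite graph on n vertices, then G has at most ⌊(n-1)²/4⌋ + 1 edges. -/
/-!
Take a shortest odd closed walk `c 0, c 1, …, c (L - 1), c L = c 0`; triangle-freeness gives
`L ≥ 5`. Minimality makes the `c i` distinct, and a vertex adjacent to two of them, `c i` and
`c j`, closes the odd one of the two arcs between them into an odd closed walk of length
`arc + 2`, so the even arc has length exactly `2`. Three neighbours on the walk would pairwise
be at cyclic distance `2`, which is impossible for odd `L ≥ 5`. Hence every vertex has at most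
two neighbours among the `L` vertices of the walk, which accounts for at most `L + 2 (n - L)`
edges, and Mantel's theorem bounds the edges among the remaining `n - L` vertices by
`(n - L)² / 4`. Finally `L + 2 (n - L) + (n - L)² / 4 ≤ (n - 1)² / 4 + 1` as `L ≥ 5`.
-/

open Finset

namespace SimpleGraph

variable {V : Type*} {G : SimpleGraph V}

theorem CliqueFree.card_edgeFinset_le_sq_div_four [Fintype V] [DecidableRel G.Adj]
    (hG : G.CliqueFree 3) : #G.edgeFinset ≤ Fintype.card V ^ 2 / 4 := by
  have hturan := hG.card_edgeFinset_le (r := 2)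
  dsimp only at hturan
  rw [Nat.choose_eq_zero_of_lt (Nat.mod_lt _ two_pos), add_zero] at hturan
  exact hturan.trans (Nat.div_le_div_right (by simp))

theorem degree_induce_eq_card_filter_adj [Fintype V] [DecidableEq V] [DecidableRel G.Adj]
    (T : Finset V) (v : (T : Set V)) :
    (G.induce (T : Set V)).degree v = #{w ∈ T | G.Adj v w} := by
  rw [← card_neighborFinset_eq_degree]
  refine card_nbij' (↑) (fun w => if h : w ∈ T then ⟨w, h⟩ else v) ?_ ?_ ?_ ?_ <;>
    intro w <;> simp_all

theorem CliqueFree.sum_card_filter_adj_le [Fintype V] [DecidableEq V] [DecidableRel G.Adj]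
    (hG : G.CliqueFree 3) (T : Finset V) :
    ∑ v ∈ T, #{w ∈ T | G.Adj v w} ≤ 2 * (#T ^ 2 / 4) := by
  have hmantel :=
    (hG.comap (Embedding.induce (T : Set V)).isContained).card_edgeFinset_le_sq_div_four
  have hdegrees := (G.induce (T : Set V)).sum_degrees_eq_twice_card_edges
  have hcard : Fintype.card (T : Set V) = #T := by simp
  have hsum : ∑ v : (T : Set V), #{w ∈ T | G.Adj v w} = ∑ v ∈ T, #{w ∈ T | G.Adj v w} :=
    (sum_set_coe (f := fun v => #{w ∈ T | G.Adj v w}) (s := (T : Set V))).trans (by simp)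
  simp only [degree_induce_eq_card_filter_adj] at hdegrees
  rw [hcard] at hmantel
  omega

theorem sum_card_filter_adj_comm [DecidableRel G.Adj] (S T : Finset V) :
    ∑ v ∈ S, #{w ∈ T | G.Adj v w} = ∑ v ∈ T, #{w ∈ S | G.Adj v w} := by
  simp only [card_filter]
  rw [sum_comm]
  simp only [G.adj_comm]

theorem degree_eq_card_filter_adj_add [Fintype V] [DecidableEq V] [DecidableRel G.Adj]
    (S : Finset V) (v : V) :
    G.degree v = #{w ∈ S | G.Adj v w} + #{w ∈ Sᶜ | G.Adj v w} := by
  rw [← card_neighborFinset_eq_degree, neighborFinset_eq_filter]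
  simp only [card_filter]
  exact (sum_add_sum_compl S _).symm

theorem two_mul_card_edgeFinset_eq [Fintype V] [DecidableEq V] [DecidableRel G.Adj]
    (S : Finset V) :
    2 * #G.edgeFinset = ∑ v ∈ S, #{w ∈ S | G.Adj v w} +
      2 * ∑ v ∈ Sᶜ, #{w ∈ S | G.Adj v w} + ∑ v ∈ Sᶜ, #{w ∈ Sᶜ | G.Adj v w} := by
  rw [← sum_degrees_eq_twice_card_edges, ← sum_add_sum_compl S]
  simp only [degree_eq_card_filter_adj_add S, sum_add_distrib, sum_card_filter_adj_comm S Sᶜ]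
  ring

theorem CliqueFree.card_edgeFinset_le_of_card_filter_adj_le_two [Fintype V] [DecidableEq V]
    [DecidableRel G.Adj] (hG : G.CliqueFree 3) {S : Finset V}
    (hS : ∀ v, #{w ∈ S | G.Adj v w} ≤ 2) :
    #G.edgeFinset ≤ #S + 2 * #Sᶜ + #Sᶜ ^ 2 / 4 := by
  have hsplit := G.two_mul_card_edgeFinset_eq S
  have hinside := sum_le_card_nsmul S _ 2 fun v _ => hS v
  have hcross := sum_le_card_nsmul Sᶜ _ 2 fun v _ => hS v
  have houtside := hG.sum_card_filter_adj_le Sᶜ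
  simp only [smul_eq_mul] at hinside hcross
  omega

theorem Walk.le_length_add_two_of_adj {L : ℕ}
    (hmin : ∀ u (w : G.Walk u u), Odd w.length → L ≤ w.length) {a b v : V} (p : G.Walk a b)
    (hp : Odd p.length) (ha : G.Adj v a) (hb : G.Adj v b) : L ≤ p.length + 2 := by
  simpa using hmin v (.cons ha (p.concat hb.symm))
    (by simpa [Nat.odd_add_one, Nat.not_even_iff_odd])

theorem Walk.length_eq_two_or_length_eq_two {L : ℕ}
    (hmin : ∀ u (w : G.Walk u u), Odd w.length → L ≤ w.length) (hL : Odd L) {a b v : V}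
    (p : G.Walk a b) (q : G.Walk b a) (hpq : p.length + q.length = L) (hab : a ≠ b)
    (ha : G.Adj v a) (hb : G.Adj v b) : p.length = 2 ∨ q.length = 2 := by
  have hp0 : p.length ≠ 0 := fun h => hab (Walk.eq_of_length_eq_zero h)
  have hq0 : q.length ≠ 0 := fun h => hab (Walk.eq_of_length_eq_zero h).symm
  rw [Nat.odd_iff] at hL
  obtain hp | hp := Nat.mod_two_eq_zero_or_one p.length
  · have := q.le_length_add_two_of_adj hmin (Nat.odd_iff.mpr (by omega)) hb ha
    omega
  · have := p.le_length_add_two_of_adj hmin (Nat.odd_iff.mpr hp) ha hb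
    omega

section CyclicSequence

/-! A closed walk of length `L`, read as the `L`-periodic sequence `c` of its vertices. -/

variable {L : ℕ} {c : ℕ → V}

theorem exists_walk_length_eq_of_adj_succ (hc : ∀ i, G.Adj (c i) (c (i + 1))) (i k : ℕ) :
    ∃ p : G.Walk (c i) (c (i + k)), p.length = k := by
  induction k with
  | zero => exact ⟨.nil, rfl⟩
  | succ k ih =>
    obtain ⟨p, hp⟩ := ih
    exact ⟨p.concat (hc (i + k)), by simp [hp]⟩

theorem exists_walks_length_add_eq (hc : ∀ i, G.Adj (c i) (c (i + 1)))
    (hper : ∀ i, c (i + L) = c i) {i j : ℕ} (hij : i ≤ j) (hji : j ≤ i + L) :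
    ∃ (p : G.Walk (c i) (c j)) (q : G.Walk (c j) (c i)),
      p.length = j - i ∧ p.length + q.length = L := by
  obtain ⟨p, hp⟩ := exists_walk_length_eq_of_adj_succ hc i (j - i)
  obtain ⟨q, hq⟩ := exists_walk_length_eq_of_adj_succ hc j (L - (j - i))
  have hj : c (i + (j - i)) = c j := by rw [Nat.add_sub_cancel' hij]
  have hi : c (j + (L - (j - i))) = c i := by rw [show j + (L - (j - i)) = i + L by omega, hper]
  exact ⟨p.copy rfl hj, q.copy rfl hi, by simpa, by simp; omega⟩

theorem eq_of_apply_eq_of_lt (hc : ∀ i, G.Adj (c i) (c (i + 1))) (hper : ∀ i, c (i + L) = c i)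
    (hmin : ∀ u (w : G.Walk u u), Odd w.length → L ≤ w.length) (hL : Odd L) {i j : ℕ}
    (hi : i < L) (hj : j < L) (h : c i = c j) : i = j := by
  wlog hij : i ≤ j generalizing i j
  · exact (this hj hi h.symm (by omega)).symm
  obtain ⟨p, q, hp, hpq⟩ := exists_walks_length_add_eq hc hper hij (by omega)
  rw [Nat.odd_iff] at hL
  obtain hq | hq := Nat.mod_two_eq_zero_or_one q.length
  · have := hmin _ (p.copy rfl h.symm) (by simp only [Walk.length_copy, Nat.odd_iff]; omega)
    simp only [Walk.length_copy] at this
    omega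
  · have := hmin _ (q.copy h.symm rfl) (by simpa using Nat.odd_iff.mpr hq)
    simp only [Walk.length_copy] at this
    omega

theorem cyclic_distance_eq_two_of_adj (hc : ∀ i, G.Adj (c i) (c (i + 1)))
    (hper : ∀ i, c (i + L) = c i)
    (hmin : ∀ u (w : G.Walk u u), Odd w.length → L ≤ w.length) (hL : Odd L) {i j : ℕ}
    (hi : i < L) (hj : j < L) (hne : c i ≠ c j) {v : V} (hvi : G.Adj v (c i))
    (hvj : G.Adj v (c j)) : j = i + 2 ∨ i = j + 2 ∨ j + 2 = i + L ∨ i + 2 = j + L := by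
  wlog hij : i ≤ j generalizing i j
  · have := this hj hi hne.symm hvj hvi (by omega)
    omega
  obtain ⟨p, q, hp, hpq⟩ := exists_walks_length_add_eq hc hper hij (by omega)
  have := Walk.length_eq_two_or_length_eq_two hmin hL p q hpq hne hvi hvj
  omega

theorem three_lt_of_cliqueFree (hG : G.CliqueFree 3) (hc : ∀ i, G.Adj (c i) (c (i + 1)))
    (hper : ∀ i, c (i + L) = c i) (hL : Odd L) : 3 < L := by
  obtain ⟨k, rfl⟩ := hL
  obtain _ | _ | k := k
  · exact absurd (hper 0 ▸ hc 0) (G.loopless.irrefl _)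
  · classical
    exact absurd (is3Clique_triple_iff.mpr ⟨hc 0, (hper 0 ▸ hc 2).symm, hc 1⟩) (hG _)
  · omega

theorem card_filter_adj_image_range_le_two [DecidableEq V] [DecidableRel G.Adj]
    (hc : ∀ i, G.Adj (c i) (c (i + 1))) (hper : ∀ i, c (i + L) = c i)
    (hmin : ∀ u (w : G.Walk u u), Odd w.length → L ≤ w.length) (hL : Odd L) (hL3 : 3 < L)
    (v : V) : #{w ∈ (range L).image c | G.Adj v w} ≤ 2 := by
  by_contra! h
  obtain ⟨x, hx, y, hy, z, hz, hxy, hxz, hyz⟩ := two_lt_card.mp h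
  simp only [mem_filter, mem_image, mem_range] at hx hy hz
  obtain ⟨⟨i, hi, rfl⟩, hvi⟩ := hx
  obtain ⟨⟨j, hj, rfl⟩, hvj⟩ := hy
  obtain ⟨⟨l, hl, rfl⟩, hvl⟩ := hz
  have := cyclic_distance_eq_two_of_adj hc hper hmin hL hi hj hxy hvi hvj
  have := cyclic_distance_eq_two_of_adj hc hper hmin hL hi hl hxz hvi hvl
  have := cyclic_distance_eq_two_of_adj hc hper hmin hL hj hl hyz hvj hvl
  rw [Nat.odd_iff] at hL
  omega

end CyclicSequence

theorem Walk.adj_getVert_mod_succ {u : V} (w : G.Walk u u) (hw : 0 < w.length) (i : ℕ) :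
    G.Adj (w.getVert (i % w.length)) (w.getVert ((i + 1) % w.length)) := by
  have hadj := w.adj_getVert_succ (Nat.mod_lt i hw)
  rw [← Nat.mod_add_mod]
  obtain hlt | heq : i % w.length + 1 < w.length ∨ i % w.length + 1 = w.length :=
    Nat.lt_or_eq_of_le (Nat.mod_lt i hw)
  · rwa [Nat.mod_eq_of_lt hlt]
  · rw [heq, Nat.mod_self, Walk.getVert_zero]
    rwa [heq, Walk.getVert_length] at hadj

theorem exists_odd_closed_walk_forall_le (hG : ¬G.Colorable 2) :
    ∃ (u : V) (w : G.Walk u u), Odd w.length ∧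
      ∀ (v : V) (w' : G.Walk v v), Odd w'.length → w.length ≤ w'.length := by
  classical
  have hex : ∃ n, ∃ (u : V) (w : G.Walk u u), Odd w.length ∧ w.length = n := by
    simp only [two_colorable_iff_forall_loop_even, not_forall, Nat.not_even_iff_odd] at hG
    obtain ⟨u, w, hw⟩ := hG
    exact ⟨_, u, w, hw, rfl⟩
  obtain ⟨u, w, hw, hlen⟩ := Nat.find_spec hex
  exact ⟨u, w, hw, fun v w' hw' => hlen ▸ Nat.find_min' hex ⟨v, w', hw', rfl⟩⟩

theorem CliqueFree.exists_five_le_card_forall_card_filter_adj_le_two [DecidableEq V]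
    [DecidableRel G.Adj] (hG : G.CliqueFree 3) (hnb : ¬G.Colorable 2) :
    ∃ S : Finset V, 5 ≤ #S ∧ ∀ v, #{w ∈ S | G.Adj v w} ≤ 2 := by
  obtain ⟨u, w, hodd, hmin⟩ := exists_odd_closed_walk_forall_le hnb
  set c : ℕ → V := fun i => w.getVert (i % w.length)
  have hc : ∀ i, G.Adj (c i) (c (i + 1)) := w.adj_getVert_mod_succ hodd.pos
  have hper : ∀ i, c (i + w.length) = c i := fun i => by simp only [c, Nat.add_mod_right]
  have h3 := three_lt_of_cliqueFree hG hc hper hodd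
  refine ⟨(range w.length).image c, ?_,
    card_filter_adj_image_range_le_two hc hper hmin hodd h3⟩
  rw [card_image_of_injOn fun i hi j hj h =>
    eq_of_apply_eq_of_lt hc hper hmin hodd (mem_range.mp hi) (mem_range.mp hj) h, card_range]
  rw [Nat.odd_iff] at hodd
  omega

end SimpleGraph

theorem Nat.add_two_mul_add_sq_div_four_le {s m : ℕ} (hs : 5 ≤ s) :
    s + 2 * m + m ^ 2 / 4 ≤ (s + m - 1) ^ 2 / 4 + 1 := by
  obtain ⟨k, rfl⟩ := Nat.exists_eq_add_of_le hs
  have hsq : m ^ 2 + (k + 4 + 2 * m) * 4 ≤ (5 + k + m - 1) ^ 2 := by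
    rw [show 5 + k + m - 1 = k + m + 4 by omega]
    nlinarith
  have := Nat.div_le_div_right (c := 4) hsq
  rw [Nat.add_mul_div_right _ _ (by norm_num)] at this
  omega

/-- Erdős: a triangle-free non-bipartite graph on `n` vertices has at most
`⌊(n-1)²/4⌋ + 1` edges. -/
theorem erdos_nonbipartite_trianglefree {n : ℕ} (G : SimpleGraph (Fin n))
    [DecidableRel G.Adj] (hfree : G.CliqueFree 3) (hnb : ¬ G.Colorable 2) :
    G.edgeFinset.card ≤ (n - 1) ^ 2 / 4 + 1 := by
  obtain ⟨S, hS5, hS2⟩ := hfree.exists_five_le_card_forall_card_filter_adj_le_two hnb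
  have hn : #S + #Sᶜ = n := by rw [card_add_card_compl, Fintype.card_fin]
  calc #G.edgeFinset ≤ #S + 2 * #Sᶜ + #Sᶜ ^ 2 / 4 :=
        hfree.card_edgeFinset_le_of_card_filter_adj_le_two hS2
    _ ≤ (#S + #Sᶜ - 1) ^ 2 / 4 + 1 := Nat.add_two_mul_add_sq_div_four_le hS5
    _ = (n - 1) ^ 2 / 4 + 1 := by rw [hn]
end

section
/- If G is a triangle-free graph with m edges, then the spectral radius of G satisfies λ(G) ≤ √m. -/
open Classical in
noncomputable def adjMat {V : Type*} [Fintype V] (G : SimpleGraph V) : Matrix V V ℝ :=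
  Matrix.of fun i j => if G.Adj i j then 1 else 0

theorem adjMat_isHermitian {V : Type*} [Fintype V] (G : SimpleGraph V) :
    (adjMat G).IsHermitian := by
  ext i j
  simp only [adjMat, Matrix.conjTranspose_apply, Matrix.of_apply, starRingEnd_apply]
  rw [G.adj_comm]
  simp

/-- Spectral radius: the largest adjacency eigenvalue. -/
noncomputable def specRad {V : Type*} [Fintype V] [DecidableEq V] (G : SimpleGraph V) : ℝ :=
  ⨆ i, (adjMat_isHermitian G).eigenvalues i

/-- `G` contains a cycle of length `ℓ`. -/
def hasCycle {V : Type*} (G : SimpleGraph V) (ℓ : ℕ) : Prop :=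
  ∃ (v : V) (w : G.Walk v v), w.IsCycle ∧ w.length = ℓ

/-!
If `μ` is an adjacency eigenvalue, then `μ²` is an eigenvalue of the nonnegative matrix `A²`, so by
Gershgorin `μ²` is at most some row sum of `A²`. The row of `A²` at `v` sums to `∑ u ∈ N(v), deg u`,
which counts the edges at the neighbours of `v`; in a triangle-free graph no edge joins two
neighbours of `v`, so these edges are distinct and there are at most `m` of them.
-/

open Finset

theorem Matrix.exists_le_sum_row_of_hasEigenvalue {n : Type*} [Fintype n] [DecidableEq n]
    {M : Matrix n n ℝ} (hM : ∀ i j, 0 ≤ M i j) {μ : ℝ}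
    (hμ : Module.End.HasEigenvalue (Matrix.toLin' M) μ) : ∃ k, μ ≤ ∑ j, M k j := by
  obtain ⟨k, hk⟩ := eigenvalue_mem_ball hμ
  refine ⟨k, ?_⟩
  calc μ ≤ M k k + ∑ j ∈ univ.erase k, ‖M k j‖ := (Real.closedBall_eq_Icc ▸ hk).2
    _ = ∑ j, M k j := by
      simp only [Real.norm_of_nonneg (hM _ _), add_sum_erase _ _ (mem_univ k)]

theorem Matrix.IsHermitian.hasEigenvalue_eigenvalues {n : Type*} [Fintype n] [DecidableEq n]
    {A : Matrix n n ℝ} (hA : A.IsHermitian) (i : n) :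
    Module.End.HasEigenvalue (Matrix.toLin' A) (hA.eigenvalues i) := by
  rw [Module.End.hasEigenvalue_iff_mem_spectrum, Matrix.spectrum_toLin']
  exact hA.eigenvalues_mem_spectrum_real i

namespace SimpleGraph

variable {V : Type*} [Fintype V] [DecidableEq V] (G : SimpleGraph V) [DecidableRel G.Adj]

omit [DecidableEq V] in
theorem adjMatrix_mul_self_sum_row (v : V) :
    ∑ w, (G.adjMatrix ℝ * G.adjMatrix ℝ) v w = ∑ u ∈ G.neighborFinset v, (G.degree u : ℝ) := by
  simp only [adjMatrix_mul_apply, adjMatrix_apply]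
  rw [sum_comm]
  refine sum_congr rfl fun u _ => ?_
  rw [sum_boole, ← card_neighborFinset_eq_degree, neighborFinset_eq_filter]

variable {G}

theorem sum_degree_neighborFinset_le_card_edgeFinset (hG : G.CliqueFree 3) (v : V) :
    ∑ u ∈ G.neighborFinset v, G.degree u ≤ #G.edgeFinset := by
  have hdisj : (G.neighborFinset v : Set V).PairwiseDisjoint (G.incidenceFinset ·) := by
    intro u hu u' hu' hne
    have hnadj : ¬G.Adj u u' := fun hadj => hG {v, u, u'} <| is3Clique_triple_iff.mpr
      ⟨(mem_neighborFinset _ _ _).mp hu, (mem_neighborFinset _ _ _).mp hu', hadj⟩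
    rw [Function.onFun, ← disjoint_coe, coe_incidenceFinset, coe_incidenceFinset,
      Set.disjoint_iff_inter_eq_empty]
    exact G.incidenceSet_inter_incidenceSet_of_not_adj hnadj hne
  calc ∑ u ∈ G.neighborFinset v, G.degree u
      = #((G.neighborFinset v).biUnion (G.incidenceFinset ·)) := by
        simp only [card_biUnion hdisj, card_incidenceFinset_eq_degree]
    _ ≤ #G.edgeFinset := card_le_card (biUnion_subset.mpr fun u _ => G.incidenceFinset_subset u)

theorem sq_le_card_edgeFinset_of_hasEigenvalue (hG : G.CliqueFree 3) {μ : ℝ}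
    (hμ : Module.End.HasEigenvalue (Matrix.toLin' (G.adjMatrix ℝ)) μ) :
    μ ^ 2 ≤ #G.edgeFinset := by
  have hμ2 := hμ.pow 2
  rw [sq, Module.End.mul_eq_comp, ← Matrix.toLin'_mul] at hμ2
  have hA : ∀ i j, 0 ≤ G.adjMatrix ℝ i j := fun i j => by
    rw [adjMatrix_apply]; split_ifs <;> norm_num
  obtain ⟨v, hv⟩ := Matrix.exists_le_sum_row_of_hasEigenvalue
    (fun i j => sum_nonneg fun k _ => mul_nonneg (hA i k) (hA k j)) hμ2
  calc μ ^ 2 ≤ ∑ u ∈ G.neighborFinset v, (G.degree u : ℝ) := G.adjMatrix_mul_self_sum_row v ▸ hv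
    _ ≤ #G.edgeFinset := mod_cast sum_degree_neighborFinset_le_card_edgeFinset hG v

end SimpleGraph

theorem adjMat_eq_adjMatrix {V : Type*} [Fintype V] (G : SimpleGraph V) [DecidableRel G.Adj] :
    adjMat G = G.adjMatrix ℝ := by
  ext i j
  simp [adjMat, SimpleGraph.adjMatrix_apply]

/-- Nosal's theorem: a triangle-free graph with `m` edges has spectral radius at most `√m`. -/
theorem nosal {n : ℕ} (G : SimpleGraph (Fin n)) [DecidableRel G.Adj]
    (h : G.CliqueFree 3) :
    specRad G ≤ Real.sqrt (G.edgeFinset.card) := by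
  refine Real.iSup_le (fun i => ?_) (Real.sqrt_nonneg _)
  have hμ : Module.End.HasEigenvalue (Matrix.toLin' (G.adjMatrix ℝ))
      ((adjMat_isHermitian G).eigenvalues i) :=
    adjMat_eq_adjMatrix G ▸ (adjMat_isHermitian G).hasEigenvalue_eigenvalues i
  exact (le_abs_self _).trans (Real.abs_le_sqrt (G.sq_le_card_edgeFinset_of_hasEigenvalue h hμ))
end

section
/- Let G be a connected graph with Perron eigenvector x (positive eigenvector of the adjacency matrix for λ(G)). Let u, v be vertices and w_1, …, w_s be neighbors of v that are not neighbors of u (and distinct from u). Let G' be obtained from G by deleting the edges vw_i and adding the edges uw_i for 1 ≤ i ≤ s, with s ≥ 1. If x_u ≥ x_v, then λ(G') > λ(G). -/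
/-!
Write `A' = A + S_u - S_v` for the adjacency matrices of the rotated graph and of `G`, where
`S_p` is the adjacency matrix of the star joining `p` to `W = {w₁, …, w_s}`. Then
`xᵀ A' x = λ ‖x‖² + 2 (x_u - x_v) Σ_W x ≥ λ ‖x‖²`, so `λ' ≥ λ` by Rayleigh. If `λ' = λ`, then `x`
maximises the Rayleigh quotient of `A'`, hence `A' x = λ x`; but `(A' x)_u = λ x_u + Σ_W x > λ x_u`.
-/

open Matrix

namespace Matrix

variable {n : Type*} [Fintype n] [DecidableEq n]

open scoped MatrixOrder in
theorem IsHermitian.posSemidef_smul_one_sub {A : Matrix n n ℝ} (hA : A.IsHermitian) {μ : ℝ}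
    (hμ : ∀ i, hA.eigenvalues i ≤ μ) : (μ • 1 - A).PosSemidef := by
  rw [← Algebra.algebraMap_eq_smul_one, ← Matrix.le_iff]
  refine le_algebraMap_of_spectrum_le (fun r hr => ?_) hA.isSelfAdjoint
  obtain ⟨i, rfl⟩ := hA.spectrum_real_eq_range_eigenvalues ▸ hr
  exact hμ i

theorem PosSemidef.mulVec_eq_smul_of_le_dotProduct {A : Matrix n n ℝ} {μ : ℝ}
    (h : (μ • 1 - A).PosSemidef) {x : n → ℝ} (hx : μ * (x ⬝ᵥ x) ≤ x ⬝ᵥ A *ᵥ x) :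
    A *ᵥ x = μ • x := by
  have hquad : x ⬝ᵥ (μ • 1 - A) *ᵥ x = μ * (x ⬝ᵥ x) - x ⬝ᵥ A *ᵥ x := by
    simp [sub_mulVec, smul_mulVec, dotProduct_sub]
  have hzero : x ⬝ᵥ (μ • 1 - A) *ᵥ x = 0 :=
    le_antisymm (by linarith) (by simpa using h.dotProduct_mulVec_nonneg x)
  have hker := (h.dotProduct_mulVec_zero_iff x).mp (by simpa using hzero)
  rw [sub_mulVec, sub_eq_zero] at hker
  simpa [smul_mulVec] using hker.symm

end Matrix

theorem posSemidef_smul_one_sub_adjMat {V : Type*} [Fintype V] [DecidableEq V]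
    {G : SimpleGraph V} {μ : ℝ} (h : specRad G ≤ μ) : (μ • 1 - adjMat G).PosSemidef :=
  (adjMat_isHermitian G).posSemidef_smul_one_sub fun i =>
    (le_ciSup (Set.finite_range _).bddAbove i).trans h

namespace SimpleGraph

variable {V : Type*}

def rotate (G : SimpleGraph V) (u v : V) (W : Finset V) : SimpleGraph V :=
  fromEdgeSet ((G.edgeSet \ {e | ∃ b ∈ W, e = s(v, b)}) ∪ {e | ∃ b ∈ W, e = s(u, b)})

theorem rotate_adj {G : SimpleGraph V} {u v : V} {W : Finset V} (huW : u ∉ W) {a b : V} :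
    (G.rotate u v W).Adj a b ↔
      G.Adj a b ∧ ¬(a = v ∧ b ∈ W ∨ b = v ∧ a ∈ W) ∨ (a = u ∧ b ∈ W ∨ b = u ∧ a ∈ W) := by
  simp only [rotate, fromEdgeSet_adj, Set.mem_union, Set.mem_sdiff, mem_edgeSet,
    Set.mem_ofPred_eq, Sym2.eq_iff]
  have hne := G.ne_of_adj (a := a) (b := b)
  grind

end SimpleGraph

section Star

variable {V : Type*} [DecidableEq V]

def starMat (p : V) (W : Finset V) : Matrix V V ℝ :=
  of fun a b => (if a = p ∧ b ∈ W then 1 else 0) + (if b = p ∧ a ∈ W then 1 else 0)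

variable [Fintype V]

theorem starMat_mulVec_apply_self {p : V} {W : Finset V} (hp : p ∉ W) (x : V → ℝ) :
    (starMat p W *ᵥ x) p = ∑ b ∈ W, x b := by
  simp [starMat, mulVec, dotProduct, hp, Finset.sum_ite_mem]

theorem starMat_mulVec_apply_of_ne {p q : V} {W : Finset V} (hqp : q ≠ p) (hq : q ∉ W)
    (x : V → ℝ) : (starMat p W *ᵥ x) q = 0 := by
  simp [starMat, mulVec, dotProduct, hqp, hq]

theorem dotProduct_starMat_mulVec (p : V) (W : Finset V) (x : V → ℝ) :
    x ⬝ᵥ starMat p W *ᵥ x = 2 * x p * ∑ b ∈ W, x b := by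
  simp only [dotProduct, mulVec, starMat, ite_and, of_apply, add_mul, ite_mul, one_mul, zero_mul,
    Finset.sum_add_distrib, Finset.sum_ite_irrel, Finset.sum_ite_mem, Finset.univ_inter,
    Finset.sum_const_zero, Finset.sum_ite_eq', Finset.mem_univ, ↓reduceIte, mul_add, mul_ite,
    Finset.mul_sum, mul_zero]
  rw [← Finset.sum_add_distrib]
  exact Finset.sum_congr rfl fun _ _ => by ring

theorem adjMat_rotate {G : SimpleGraph V} {u v : V} {W : Finset V}
    (hv : ∀ b ∈ W, G.Adj v b) (hu : ∀ b ∈ W, ¬G.Adj u b) (huW : u ∉ W) :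
    adjMat (G.rotate u v W) = adjMat G + starMat u W - starMat v W := by
  ext a b
  simp only [adjMat, starMat, of_apply, Matrix.add_apply, Matrix.sub_apply]
  rw [SimpleGraph.rotate_adj huW]
  have hne := G.ne_of_adj (a := a) (b := b)
  have hsymm := G.adj_comm a b
  split_ifs <;> grind

end Star

theorem rotation_increases_specRad_general {n : ℕ} (G : SimpleGraph (Fin n))
    (x : Fin n → ℝ) (hx : ∀ i, 0 < x i)
    (hEig : (adjMat G).mulVec x = specRad G • x)
    (u v : Fin n) (s : ℕ) (hs : 1 ≤ s) (w : Fin s → Fin n)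
    (hwv : ∀ i, G.Adj v (w i))
    (hwu : ∀ i, ¬ G.Adj u (w i) ∧ w i ≠ u)
    (hxuv : x v ≤ x u) :
    specRad G < specRad (SimpleGraph.fromEdgeSet
      ((G.edgeSet \ {e | ∃ i, e = s(v, w i)}) ∪ {e | ∃ i, e = s(u, w i)})) := by
  set W := Finset.univ.image w
  have hrot : SimpleGraph.fromEdgeSet ((G.edgeSet \ {e | ∃ i, e = s(v, w i)}) ∪
      {e | ∃ i, e = s(u, w i)}) = G.rotate u v W := by
    simp [SimpleGraph.rotate, W]
  have huW : u ∉ W := by simpa [W] using fun i => (hwu i).2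
  have huv : u ≠ v := fun h => (hwu ⟨0, hs⟩).1 (h ▸ hwv ⟨0, hs⟩)
  have hA := adjMat_rotate (by simpa [W] using hwv) (by simpa [W] using fun i => (hwu i).1) huW
  have hS : 0 < ∑ b ∈ W, x b :=
    Finset.sum_pos (fun b _ => hx b) ((Finset.univ_nonempty_iff.mpr ⟨⟨0, hs⟩⟩).image w)
  rw [hrot]
  by_contra! hle
  have hEig' : adjMat (G.rotate u v W) *ᵥ x = specRad G • x := by
    refine (posSemidef_smul_one_sub_adjMat hle).mulVec_eq_smul_of_le_dotProduct ?_
    rw [hA, sub_mulVec, add_mulVec, dotProduct_sub, dotProduct_add, hEig, dotProduct_smul,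
      dotProduct_starMat_mulVec, dotProduct_starMat_mulVec, smul_eq_mul]
    nlinarith
  have hu := congrFun hEig' u
  rw [hA, sub_mulVec, add_mulVec, Pi.sub_apply, Pi.add_apply, hEig,
    starMat_mulVec_apply_self huW, starMat_mulVec_apply_of_ne huv huW] at hu
  simp only [Pi.smul_apply, smul_eq_mul] at hu
  linarith

/-- Wu–Xiao–Hong rotation lemma: if `x` is the positive Perron eigenvector of a connected
graph `G`, `w 1, …, w s` are neighbors of `v` that are neither neighbors of `u` nor equal
to `u`, and `x u ≥ x v`, then moving the edges `v wᵢ` to `u wᵢ` strictly increases the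
spectral radius. -/
theorem rotation_increases_specRad {n : ℕ} (G : SimpleGraph (Fin n))
    (hconn : G.Connected) (x : Fin n → ℝ) (hx : ∀ i, 0 < x i)
    (hEig : (adjMat G).mulVec x = specRad G • x)
    (u v : Fin n) (s : ℕ) (hs : 1 ≤ s) (w : Fin s → Fin n)
    (hinj : Function.Injective w)
    (hwv : ∀ i, G.Adj v (w i))
    (hwu : ∀ i, ¬ G.Adj u (w i) ∧ w i ≠ u)
    (hxuv : x v ≤ x u) :
    specRad G < specRad (SimpleGraph.fromEdgeSet
      ((G.edgeSet \ {e | ∃ i, e = s(v, w i)}) ∪ {e | ∃ i, e = s(u, w i)})) :=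
  rotation_increases_specRad_general G x hx hEig u v s hs w hwv hwu hxuv
end

section
/- Let C_{2ℓ+1}(T_{n-2ℓ,2}) denote the graph obtained by identifying one vertex of a cycle of length 2ℓ+1 with a vertex in the smaller part of the complete bipartite Turán graph T_{n-2ℓ,2}. If ℓ < t are positive integers (with n large enough that all graphs are defined), then λ(C_{2t+1}(T_{n-2t,2})) < λ(C_{2ℓ+1}(T_{n-2ℓ,2})). -/
/-- `cycleTuran n ℓ` is the graph `C_{2ℓ+1}(T_{n-2ℓ,2})` on `n` vertices: a complete bipartite
Turán graph `T_{n-2ℓ,2}` with parts `{0, …, ⌊(n-2ℓ)/2⌋ - 1}` (the smaller part) and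
`{⌊(n-2ℓ)/2⌋, …, n-2ℓ-1}`, together with a cycle of length `2ℓ+1` through the vertices
`0, n-2ℓ, n-2ℓ+1, …, n-1, 0`, identified with the Turán graph at the vertex `0` of the
smaller part. -/
def cycleTuran (n ℓ : ℕ) : SimpleGraph (Fin n) :=
  SimpleGraph.fromRel (fun i j =>
    (i.val < (n - 2 * ℓ) / 2 ∧ (n - 2 * ℓ) / 2 ≤ j.val ∧ j.val < n - 2 * ℓ) ∨
    (i.val = 0 ∧ j.val = n - 2 * ℓ ∧ 1 ≤ ℓ) ∨
    (n - 2 * ℓ ≤ i.val ∧ j.val = i.val + 1) ∨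
    (i.val = 0 ∧ j.val = n - 1 ∧ 1 ≤ ℓ))

/-!
Write `n - 2t = a + b` with `a = ⌊(n - 2t)/2⌋ ≤ b`. The positive vector equal to `M (M - 1)` on the
smaller part, `a (M - 1)` on the larger part and `M` on the rest of the cycle satisfies `A w ≤ M w`
as soon as `M ≥ 2` and `M ^ 2 ≥ a b + 4`, so by the Collatz–Wielandt bound the spectral radius for
`t` is at most `√(a b + 4)`. Passing from `t` to `ℓ = t - s` enlarges both parts by `s`, and the
Rayleigh quotient of the indicator of the Turán part bounds the spectral radius for `ℓ` from below
by `2 (a + s) (b + s) / (a + b + 2 s)`, which beats `√(a b + 4)` unless `a = s = 1`. In those two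
cases a test vector that also weights the cycle neighbours of the attachment vertex suffices.
-/

open Matrix

namespace Matrix.IsHermitian

variable {V : Type*} [Fintype V] [DecidableEq V] {A : Matrix V V ℝ}

theorem dotProduct_mulVec_le_iSup_eigenvalues_mul (hA : A.IsHermitian) (x : V → ℝ) :
    x ⬝ᵥ A *ᵥ x ≤ (⨆ i, hA.eigenvalues i) * (x ⬝ᵥ x) := by
  set U : Matrix V V ℝ := (hA.eigenvectorUnitary : Matrix V V ℝ)
  have hUt : star U = Uᵀ := by ext i j; simp [U]
  have hspec : A = U * diagonal hA.eigenvalues * Uᵀ := by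
    have := hA.spectral_theorem
    rwa [RCLike.ofReal_real_eq_id, Function.id_comp, Unitary.conjStarAlgAut_apply, hUt] at this
  have hUUt : U * Uᵀ = 1 := by
    rw [← hUt]; exact mem_unitaryGroup_iff.mp hA.eigenvectorUnitary.2
  -- in the coordinates `y = Uᵀ x` both quadratic forms become diagonal
  set y := Uᵀ *ᵥ x
  have hxU : x ᵥ* U = y := (mulVec_transpose U x).symm
  have hAx : x ⬝ᵥ A *ᵥ x = ∑ i, hA.eigenvalues i * y i ^ 2 := by
    rw [congrArg (fun B => x ⬝ᵥ B *ᵥ x) hspec, ← mulVec_mulVec, ← mulVec_mulVec,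
      dotProduct_mulVec, hxU]
    simp only [dotProduct, mulVec_diagonal, y]
    exact Finset.sum_congr rfl fun i _ => by ring
  have hxx : x ⬝ᵥ x = ∑ i, y i ^ 2 := by
    have hx : U *ᵥ y = x := by rw [mulVec_mulVec, hUUt, one_mulVec]
    calc x ⬝ᵥ x = x ⬝ᵥ U *ᵥ y := by rw [hx]
      _ = y ⬝ᵥ y := by rw [dotProduct_mulVec, hxU]
      _ = ∑ i, y i ^ 2 := by simp [dotProduct, sq]
  rw [hAx, hxx, Finset.mul_sum]
  refine Finset.sum_le_sum fun i _ => mul_le_mul_of_nonneg_right ?_ (sq_nonneg _)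
  exact le_ciSup (Set.finite_range _).bddAbove i

end Matrix.IsHermitian

/-- Collatz–Wielandt: compare `v` with `w` at a coordinate where `|v i| / w i` is maximal. -/
theorem Matrix.abs_le_of_mulVec_eq_smul {V : Type*} [Fintype V] {A : Matrix V V ℝ}
    (hA : ∀ i j, 0 ≤ A i j) {v w : V → ℝ} {μ M : ℝ} (hv : A *ᵥ v = μ • v) (hv0 : v ≠ 0)
    (hw : ∀ i, 0 < w i) (hAw : ∀ i, (A *ᵥ w) i ≤ M * w i) : |μ| ≤ M := by
  obtain ⟨k, hk⟩ := Function.ne_iff.mp hv0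
  have : Nonempty V := ⟨k⟩
  obtain ⟨i, hi⟩ := Finite.exists_max fun j => |v j| / w j
  set c := |v i| / w i
  have hc : 0 ≤ c := div_nonneg (abs_nonneg _) (hw i).le
  have hvi : 0 < |v i| := by
    have : 0 < c := (div_pos (abs_pos.mpr hk) (hw k)).trans_le (hi k)
    exact (div_pos_iff_of_pos_right (hw i)).mp this
  have hvw : ∀ j, |v j| ≤ c * w j := fun j => by
    have := hi j
    rwa [div_le_iff₀ (hw j)] at this
  have : |μ| * |v i| ≤ M * |v i| :=
    calc |μ| * |v i| = |∑ j, A i j * v j| := by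
          rw [← abs_mul, ← smul_eq_mul, ← Pi.smul_apply, ← hv]; rfl
      _ ≤ ∑ j, A i j * (c * w j) := by
          refine (Finset.abs_sum_le_sum_abs _ _).trans (Finset.sum_le_sum fun j _ => ?_)
          rw [abs_mul, abs_of_nonneg (hA i j)]
          exact mul_le_mul_of_nonneg_left (hvw j) (hA i j)
      _ = c * (A *ᵥ w) i := by
          simp only [mulVec, dotProduct, Finset.mul_sum]
          exact Finset.sum_congr rfl fun j _ => by ring
      _ ≤ c * (M * w i) := mul_le_mul_of_nonneg_left (hAw i) hc
      _ = M * |v i| := by simp only [c]; field_simp [(hw i).ne']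
  exact le_of_mul_le_mul_right this hvi

section SpectralRadius

variable {V : Type*} [Fintype V] [DecidableEq V]

theorem dotProduct_adjMat_mulVec_le (G : SimpleGraph V) (x : V → ℝ) :
    x ⬝ᵥ adjMat G *ᵥ x ≤ specRad G * (x ⬝ᵥ x) :=
  (adjMat_isHermitian G).dotProduct_mulVec_le_iSup_eigenvalues_mul x

theorem specRad_le_of_adjMat_mulVec_le [Nonempty V] (G : SimpleGraph V) {w : V → ℝ} {M : ℝ}
    (hw : ∀ i, 0 < w i) (hGw : ∀ i, (adjMat G *ᵥ w) i ≤ M * w i) : specRad G ≤ M := by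
  have hA := adjMat_isHermitian G
  refine ciSup_le fun i => (le_abs_self _).trans ?_
  refine abs_le_of_mulVec_eq_smul (fun i j => ?_) (hA.mulVec_eigenvectorBasis i) ?_ hw hGw
  · simp only [adjMat, of_apply]; split_ifs <;> norm_num
  · exact fun h => hA.eigenvectorBasis.orthonormal.ne_zero i (by ext j; exact congrFun h j)

end SpectralRadius

theorem adjMat_mulVec_apply_eq_sum_of_adj_iff {N : ℕ} {G : SimpleGraph (Fin N)} {i : Fin N}
    {s : Finset ℕ} (hs : ∀ j : Fin N, G.Adj i j ↔ j.val ∈ s) (hsN : ∀ j ∈ s, j < N)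
    (x : ℕ → ℝ) : (adjMat G *ᵥ fun j => x j.val) i = ∑ j ∈ s, x j := by
  have hs' : (Finset.range N).filter (· ∈ s) = s := by
    ext j; simp only [Finset.mem_filter, Finset.mem_range]; exact ⟨And.right, fun h => ⟨hsN j h, h⟩⟩
  calc (adjMat G *ᵥ fun j : Fin N => x j.val) i
      = ∑ j : Fin N, (if j.val ∈ s then x j.val else 0 : ℝ) := by
        simp only [mulVec, dotProduct, adjMat, of_apply, hs, ite_mul, one_mul, zero_mul]
    _ = ∑ j ∈ s, x j := by
        rw [Fin.sum_univ_eq_sum_range (fun j => if j ∈ s then x j else 0), ← Finset.sum_filter, hs']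

theorem mul_add_four_mul_sq_lt {a b s : ℕ} (ha : 1 ≤ a) (hs : 1 ≤ s) (has : 2 ≤ a ∨ 2 ≤ s)
    (hb : b = a ∨ b = a + 1) : (a * b + 4) * (a + b + 2 * s) ^ 2 < (2 * (a + s) * (b + s)) ^ 2 := by
  rcases hb with rfl | rfl
  · have : b * b + 4 < (b + s) * (b + s) := by rcases has with h | h <;> nlinarith
    calc (b * b + 4) * (b + b + 2 * s) ^ 2 < (b + s) * (b + s) * (b + b + 2 * s) ^ 2 :=
          Nat.mul_lt_mul_of_pos_right this (by positivity)
      _ = (2 * (b + s) * (b + s)) ^ 2 := by ring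
  · -- with `K = (a + s) (a + s + 1)` the claim reads `(a (a + 1) + 4) (4 K + 1) < 4 K ^ 2`
    have : a * (a + 1) + 5 ≤ (a + s) * (a + s + 1) := by rcases has with h | h <;> nlinarith
    nlinarith

theorem sqrt_mul_add_four_lt_div {a b s : ℕ} (ha : 1 ≤ a) (hs : 1 ≤ s) (has : 2 ≤ a ∨ 2 ≤ s)
    (hb : b = a ∨ b = a + 1) :
    √(a * b + 4) < 2 * ((a + s) * (b + s)) / ((a + s) + (b + s)) := by
  rw [Real.sqrt_lt' (by positivity), div_pow, lt_div_iff₀ (by positivity)]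
  exact_mod_cast (show (a * b + 4) * ((a + s) + (b + s)) ^ 2 < (2 * ((a + s) * (b + s))) ^ 2 by
    convert mul_add_four_mul_sq_lt ha hs has hb using 2 <;> ring)

section CycleTuran

variable {n ℓ a b : ℕ}

def cycleTuranNbhd (a b ℓ i : ℕ) : Finset ℕ :=
  if i = 0 then insert (a + b) (insert (a + b + 2 * ℓ - 1) (Finset.Ico a (a + b)))
  else if i < a then Finset.Ico a (a + b)
  else if i < a + b then Finset.range a
  else if i = a + b then {0, i + 1}
  else if i = a + b + 2 * ℓ - 1 then {0, i - 1}
  else {i - 1, i + 1}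

theorem cycleTuran_adj_iff (hn : n = a + b + 2 * ℓ) (hℓ : 1 ≤ ℓ) (ha : 1 ≤ a) (hab : a ≤ b)
    (hba : b ≤ a + 1) (i j : Fin n) :
    (cycleTuran n ℓ).Adj i j ↔ j.val ∈ cycleTuranNbhd a b ℓ i.val := by
  have hi := i.isLt
  have hj := j.isLt
  have hm : n - 2 * ℓ = a + b := by omega
  have hmid : (a + b) / 2 = a := by omega
  simp only [cycleTuran, SimpleGraph.fromRel_adj, ne_eq, Fin.ext_iff, cycleTuranNbhd, hm, hmid, hℓ,
    and_true]
  split_ifs <;> simp only [Finset.mem_insert, Finset.mem_singleton, Finset.mem_Ico,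
    Finset.mem_range] <;> grind

theorem cycleTuranNbhd_lt (hn : n = a + b + 2 * ℓ) (hℓ : 1 ≤ ℓ) {i : ℕ} (hi : i < n) :
    ∀ j ∈ cycleTuranNbhd a b ℓ i, j < n := by
  intro j hj
  simp only [cycleTuranNbhd] at hj
  split_ifs at hj <;> simp only [Finset.mem_insert, Finset.mem_singleton, Finset.mem_Ico,
    Finset.mem_range] at hj <;> omega

theorem Fin.sum_univ_eq_sum_cycleTuran_parts {R : Type*} [AddCommMonoid R]
    (hn : n = a + b + 2 * ℓ) (hℓ : 1 ≤ ℓ) (ha : 1 ≤ a) (f : ℕ → R) :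
    ∑ i : Fin n, f i.val = f 0 + ∑ i ∈ Finset.Ico 1 a, f i + ∑ i ∈ Finset.Ico a (a + b), f i +
      f (a + b) + ∑ i ∈ Finset.Ico (a + b + 1) (n - 1), f i + f (n - 1) := by
  obtain ⟨k, rfl⟩ : ∃ k, n = k + 1 := ⟨n - 1, by omega⟩
  rw [Fin.sum_univ_eq_sum_range, Finset.sum_range_succ, Nat.add_sub_cancel,
    ← Finset.sum_range_add_sum_Ico _ (show a + b + 1 ≤ k by omega), Finset.sum_range_succ,
    ← Finset.sum_range_add_sum_Ico _ (show a ≤ a + b by omega),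
    Finset.sum_range_eq_add_Ico _ (by omega)]

theorem adjMat_cycleTuran_mulVec_apply (hn : n = a + b + 2 * ℓ) (hℓ : 1 ≤ ℓ) (ha : 1 ≤ a)
    (hab : a ≤ b) (hba : b ≤ a + 1) (x : ℕ → ℝ) (i : Fin n) :
    (adjMat (cycleTuran n ℓ) *ᵥ fun j : Fin n => x j.val) i =
      ∑ j ∈ cycleTuranNbhd a b ℓ i.val, x j :=
  adjMat_mulVec_apply_eq_sum_of_adj_iff (cycleTuran_adj_iff hn hℓ ha hab hba i)
    (cycleTuranNbhd_lt hn hℓ i.isLt) x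

def cycleTuranUpperVec (a b : ℕ) (M : ℝ) (j : ℕ) : ℝ :=
  if j < a then M * (M - 1) else if j < a + b then a * (M - 1) else M

theorem adjMat_cycleTuran_mulVec_upperVec_le (hn : n = a + b + 2 * ℓ) (hℓ : 1 ≤ ℓ) (ha : 1 ≤ a)
    (hab : a ≤ b) (hba : b ≤ a + 1) {M : ℝ} (hM : 2 ≤ M) (hMsq : a * b + 4 ≤ M ^ 2) (i : Fin n) :
    (adjMat (cycleTuran n ℓ) *ᵥ fun j : Fin n => cycleTuranUpperVec a b M j.val) i ≤
      M * cycleTuranUpperVec a b M i.val := by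
  set w := cycleTuranUpperVec a b M
  have hw_small {j : ℕ} (hj : j < a) : w j = M * (M - 1) := if_pos hj
  have hw_large {j : ℕ} (hj : j ∈ Finset.Ico a (a + b)) : w j = a * (M - 1) := by
    rw [Finset.mem_Ico] at hj
    simp only [w, cycleTuranUpperVec, if_neg (Nat.not_lt.mpr hj.1), if_pos hj.2]
  have hw_cycle {j : ℕ} (hj : a + b ≤ j) : w j = M := by
    simp only [w, cycleTuranUpperVec, if_neg (show ¬j < a by omega), if_neg (Nat.not_lt.mpr hj)]
  have hi := i.isLt
  have hM1 : 0 ≤ M - 1 := by linarith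
  rw [adjMat_cycleTuran_mulVec_apply hn hℓ ha hab hba]
  obtain h | h | h | h | h | h : i.val = 0 ∨ (i.val ≠ 0 ∧ i.val < a) ∨
      (a ≤ i.val ∧ i.val < a + b) ∨ i.val = a + b ∨ i.val = n - 1 ∨
      (a + b < i.val ∧ i.val < n - 1) := by omega
  · rw [cycleTuranNbhd, if_pos h, Finset.sum_insert (by simp; omega),
      Finset.sum_insert (by simp; omega), Finset.sum_eq_card_nsmul fun j hj => hw_large hj,
      hw_cycle le_rfl, hw_cycle (by omega), hw_small (by omega), Nat.card_Ico,
      Nat.add_sub_cancel_left, nsmul_eq_mul]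
    nlinarith [mul_le_mul_of_nonneg_right hMsq hM1]
  · rw [cycleTuranNbhd, if_neg h.1, if_pos h.2, Finset.sum_eq_card_nsmul fun j hj => hw_large hj,
      hw_small h.2, Nat.card_Ico, Nat.add_sub_cancel_left, nsmul_eq_mul]
    nlinarith [mul_le_mul_of_nonneg_right hMsq hM1]
  · rw [cycleTuranNbhd, if_neg (by omega), if_neg (by omega), if_pos h.2,
      Finset.sum_eq_card_nsmul fun j hj => hw_small (Finset.mem_range.1 hj),
      hw_large (Finset.mem_Ico.2 h), Finset.card_range, nsmul_eq_mul]
    exact le_of_eq (by ring)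
  · rw [cycleTuranNbhd, if_neg (by omega), if_neg (by omega), if_neg (by omega), if_pos h,
      Finset.sum_pair (by omega), hw_small (by omega), hw_cycle (by omega), hw_cycle h.ge]
    exact le_of_eq (by ring)
  · rw [cycleTuranNbhd, if_neg (by omega), if_neg (by omega), if_neg (by omega),
      if_neg (by omega), if_pos (by omega), Finset.sum_pair (by omega), hw_small (by omega),
      hw_cycle (by omega), hw_cycle (by omega)]
    exact le_of_eq (by ring)
  · rw [cycleTuranNbhd, if_neg (by omega), if_neg (by omega), if_neg (by omega),
      if_neg (by omega), if_neg (by omega), Finset.sum_pair (by omega), hw_cycle (by omega),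
      hw_cycle (by omega), hw_cycle (by omega)]
    nlinarith

theorem specRad_cycleTuran_le (hn : n = a + b + 2 * ℓ) (hℓ : 1 ≤ ℓ) (ha : 1 ≤ a) (hab : a ≤ b)
    (hba : b ≤ a + 1) : specRad (cycleTuran n ℓ) ≤ √(a * b + 4) := by
  have ha' : (1 : ℝ) ≤ a := by exact_mod_cast ha
  have hM : 2 ≤ √((a : ℝ) * b + 4) := Real.le_sqrt_of_sq_le (by norm_num; positivity)
  have : Nonempty (Fin n) := ⟨⟨0, by omega⟩⟩
  refine specRad_le_of_adjMat_mulVec_le _ (fun i => ?_) (adjMat_cycleTuran_mulVec_upperVec_le hn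
    hℓ ha hab hba hM (Real.sq_sqrt (by positivity)).ge)
  simp only [cycleTuranUpperVec]
  split_ifs <;> first | positivity | exact mul_pos (by linarith) (by linarith)

def cycleTuranLowerVec (a b n : ℕ) (p r q u : ℝ) (j : ℕ) : ℝ :=
  if j = 0 then p else if j < a then r else if j < a + b then q
  else if j = a + b ∨ j = n - 1 then u else 0

section LowerVec

variable {p r q u : ℝ} {j : ℕ}

theorem cycleTuranLowerVec_of_mem_Ico_one (hj : j ∈ Finset.Ico 1 a) :
    cycleTuranLowerVec a b n p r q u j = r := by
  rw [Finset.mem_Ico] at hj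
  rw [cycleTuranLowerVec, if_neg (by omega), if_pos hj.2]

theorem cycleTuranLowerVec_of_mem_Ico (ha : 1 ≤ a) (hj : j ∈ Finset.Ico a (a + b)) :
    cycleTuranLowerVec a b n p r q u j = q := by
  rw [Finset.mem_Ico] at hj
  rw [cycleTuranLowerVec, if_neg (by omega), if_neg (by omega), if_pos hj.2]

theorem cycleTuranLowerVec_of_eq (hn : n = a + b + 2 * ℓ) (hℓ : 1 ≤ ℓ) (ha : 1 ≤ a)
    (hj : j = a + b ∨ j = n - 1) : cycleTuranLowerVec a b n p r q u j = u := by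
  rw [cycleTuranLowerVec, if_neg (by omega), if_neg (by omega), if_neg (by omega), if_pos hj]

theorem cycleTuranLowerVec_of_mem_Ico_cycle (hj : j ∈ Finset.Ico (a + b + 1) (n - 1)) :
    cycleTuranLowerVec a b n p r q u j = 0 := by
  rw [Finset.mem_Ico] at hj
  rw [cycleTuranLowerVec, if_neg (by omega), if_neg (by omega), if_neg (by omega),
    if_neg (by omega)]

theorem cycleTuranLowerVec_nonneg_of_le (ha : 1 ≤ a) (hu : 0 ≤ u) (hj : a + b ≤ j) :
    0 ≤ cycleTuranLowerVec a b n p r q u j := by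
  rw [cycleTuranLowerVec, if_neg (by omega), if_neg (by omega), if_neg (by omega)]
  split_ifs <;> simp [hu]

theorem dotProduct_self_cycleTuranLowerVec (hn : n = a + b + 2 * ℓ) (hℓ : 1 ≤ ℓ) (ha : 1 ≤ a) :
    (fun j : Fin n => cycleTuranLowerVec a b n p r q u j.val) ⬝ᵥ
        (fun j : Fin n => cycleTuranLowerVec a b n p r q u j.val) =
      p ^ 2 + (a - 1) * r ^ 2 + b * q ^ 2 + 2 * u ^ 2 := by
  rw [dotProduct, Fin.sum_univ_eq_sum_cycleTuran_parts hn hℓ ha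
      (fun k => cycleTuranLowerVec a b n p r q u k * cycleTuranLowerVec a b n p r q u k),
    Finset.sum_eq_card_nsmul fun j hj => by rw [cycleTuranLowerVec_of_mem_Ico_one hj],
    Finset.sum_eq_card_nsmul fun j hj => by rw [cycleTuranLowerVec_of_mem_Ico ha hj],
    Finset.sum_eq_zero fun j hj => by rw [cycleTuranLowerVec_of_mem_Ico_cycle hj, mul_zero],
    cycleTuranLowerVec_of_eq hn hℓ ha (Or.inl rfl),
    cycleTuranLowerVec_of_eq hn hℓ ha (Or.inr rfl),
    Nat.card_Ico, Nat.card_Ico, Nat.add_sub_cancel_left, nsmul_eq_mul, nsmul_eq_mul,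
    Nat.cast_sub ha, Nat.cast_one, cycleTuranLowerVec, if_pos rfl]
  ring

theorem le_dotProduct_adjMat_cycleTuranLowerVec (hn : n = a + b + 2 * ℓ) (hℓ : 1 ≤ ℓ)
    (ha : 1 ≤ a) (hab : a ≤ b) (hba : b ≤ a + 1) (hu : 0 ≤ u) :
    2 * (b * p * q + (a - 1) * b * r * q + 2 * p * u) ≤
      (fun j : Fin n => cycleTuranLowerVec a b n p r q u j.val) ⬝ᵥ
        adjMat (cycleTuran n ℓ) *ᵥ (fun j : Fin n => cycleTuranLowerVec a b n p r q u j.val) := by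
  set x := cycleTuranLowerVec a b n p r q u
  have hx0 : x 0 = p := if_pos rfl
  have hxS {j : ℕ} (hj : j ∈ Finset.Ico 1 a) : x j = r := cycleTuranLowerVec_of_mem_Ico_one hj
  have hxL {j : ℕ} (hj : j ∈ Finset.Ico a (a + b)) : x j = q :=
    cycleTuranLowerVec_of_mem_Ico ha hj
  have hxC {j : ℕ} (hj : j = a + b ∨ j = n - 1) : x j = u := cycleTuranLowerVec_of_eq hn hℓ ha hj
  have hsumS : ∑ j ∈ Finset.Ico 1 a, x j = (a - 1) * r := by
    rw [Finset.sum_eq_card_nsmul fun j hj => hxS hj, Nat.card_Ico, nsmul_eq_mul, Nat.cast_sub ha,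
      Nat.cast_one]
  have hsumL : ∑ j ∈ Finset.Ico a (a + b), x j = b * q := by
    rw [Finset.sum_eq_card_nsmul fun j hj => hxL hj, Nat.card_Ico, Nat.add_sub_cancel_left,
      nsmul_eq_mul]
  simp only [dotProduct, adjMat_cycleTuran_mulVec_apply hn hℓ ha hab hba]
  rw [Fin.sum_univ_eq_sum_cycleTuran_parts hn hℓ ha
    (fun k => x k * ∑ j ∈ cycleTuranNbhd a b ℓ k, x j)]
  have h0 : ∑ j ∈ cycleTuranNbhd a b ℓ 0, x j = u + (u + b * q) := by
    rw [cycleTuranNbhd, if_pos rfl, Finset.sum_insert (by simp; omega),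
      Finset.sum_insert (by simp; omega), hxC (Or.inl rfl), hxC (Or.inr (by omega)), hsumL]
  have hS : ∑ k ∈ Finset.Ico 1 a, x k * ∑ j ∈ cycleTuranNbhd a b ℓ k, x j =
      (a - 1) * (r * (b * q)) := by
    rw [Finset.sum_eq_card_nsmul fun k hk => by
        rw [hxS hk, cycleTuranNbhd,
          if_neg (by simp at hk; omega), if_pos (Finset.mem_Ico.1 hk).2, hsumL],
      Nat.card_Ico, nsmul_eq_mul, Nat.cast_sub ha, Nat.cast_one]
  have hL : ∑ k ∈ Finset.Ico a (a + b), x k * ∑ j ∈ cycleTuranNbhd a b ℓ k, x j =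
      b * (q * (p + (a - 1) * r)) := by
    rw [Finset.sum_eq_card_nsmul fun k hk => by
        rw [Finset.mem_Ico] at hk
        rw [hxL (Finset.mem_Ico.2 hk), cycleTuranNbhd,
          if_neg (by omega), if_neg (by omega), if_pos hk.2,
          Finset.sum_range_eq_add_Ico _ (by omega), hx0, hsumS],
      Nat.card_Ico, Nat.add_sub_cancel_left, nsmul_eq_mul]
  have hO : ∑ k ∈ Finset.Ico (a + b + 1) (n - 1), x k * ∑ j ∈ cycleTuranNbhd a b ℓ k, x j = 0 :=
    Finset.sum_eq_zero fun k hk => by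
      rw [show x k = 0 from cycleTuranLowerVec_of_mem_Ico_cycle hk, zero_mul]
  -- for `ℓ = 1` the two cycle neighbours of `0` are adjacent, whence only inequalities here
  have hC : u * p ≤ x (a + b) * ∑ j ∈ cycleTuranNbhd a b ℓ (a + b), x j := by
    rw [cycleTuranNbhd, if_neg (by omega), if_neg (by omega), if_neg (by omega), if_pos rfl,
      Finset.sum_pair (by omega), hx0, hxC (Or.inl rfl)]
    nlinarith [show 0 ≤ x (a + b + 1) from cycleTuranLowerVec_nonneg_of_le ha hu (by omega)]
  have hC' : u * p ≤ x (n - 1) * ∑ j ∈ cycleTuranNbhd a b ℓ (n - 1), x j := by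
    rw [cycleTuranNbhd, if_neg (by omega), if_neg (by omega), if_neg (by omega),
      if_neg (by omega), if_pos (by omega), Finset.sum_pair (by omega), hx0, hxC (Or.inr rfl)]
    nlinarith [show 0 ≤ x (n - 1 - 1) from cycleTuranLowerVec_nonneg_of_le ha hu (by omega)]
  rw [hx0, h0, hS, hL, hO]
  linarith

end LowerVec

theorem two_mul_le_specRad_cycleTuran_mul (hn : n = a + b + 2 * ℓ) (hℓ : 1 ≤ ℓ) (ha : 1 ≤ a)
    (hab : a ≤ b) (hba : b ≤ a + 1) (p r q u : ℝ) (hu : 0 ≤ u) :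
    2 * (b * p * q + (a - 1) * b * r * q + 2 * p * u) ≤
      specRad (cycleTuran n ℓ) * (p ^ 2 + (a - 1) * r ^ 2 + b * q ^ 2 + 2 * u ^ 2) := by
  rw [← dotProduct_self_cycleTuranLowerVec hn hℓ ha]
  exact (le_dotProduct_adjMat_cycleTuranLowerVec hn hℓ ha hab hba hu).trans
    (dotProduct_adjMat_mulVec_le _ _)

theorem two_mul_div_le_specRad_cycleTuran (hn : n = a + b + 2 * ℓ) (hℓ : 1 ≤ ℓ) (ha : 1 ≤ a)
    (hab : a ≤ b) (hba : b ≤ a + 1) : 2 * (a * b) / (a + b) ≤ specRad (cycleTuran n ℓ) := by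
  have h := two_mul_le_specRad_cycleTuran_mul hn hℓ ha hab hba 1 1 1 0 le_rfl
  rw [div_le_iff₀ (by positivity)]
  linarith

theorem sqrt_lt_specRad_cycleTuran {s : ℕ} (hn : n = (a + s) + (b + s) + 2 * ℓ) (hℓ : 1 ≤ ℓ)
    (hs : 1 ≤ s) (ha : 1 ≤ a) (hab : a ≤ b) (hba : b ≤ a + 1) :
    √(a * b + 4) < specRad (cycleTuran n ℓ) := by
  obtain has | ⟨rfl, rfl, rfl | rfl⟩ : (2 ≤ a ∨ 2 ≤ s) ∨ (a = 1 ∧ s = 1 ∧ (b = 1 ∨ b = 2)) := by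
    omega
  · calc √(a * b + 4) < 2 * ((a + s) * (b + s)) / ((a + s) + (b + s)) :=
          sqrt_mul_add_four_lt_div ha hs has (by omega)
      _ ≤ specRad (cycleTuran n ℓ) := by
          exact_mod_cast two_mul_div_le_specRad_cycleTuran hn hℓ (by omega) (by omega) (by omega)
  -- for `a = s = 1` the indicator of the Turán part is too weak; these vectors also weight the
  -- vertex `0` and its cycle neighbours
  · have h := two_mul_le_specRad_cycleTuran_mul hn hℓ le_add_self le_rfl (by omega) 3 2 2 1
      zero_le_one
    norm_num at h
    calc _ < (52 / 23 : ℝ) := by rw [Real.sqrt_lt' (by norm_num)]; norm_num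
      _ ≤ _ := by rw [div_le_iff₀ (by norm_num)]; linarith
  · have h := two_mul_le_specRad_cycleTuran_mul hn hℓ le_add_self (by omega) (by omega) 2 1 1 1
      zero_le_one
    norm_num at h
    calc _ < (13 / 5 : ℝ) := by rw [Real.sqrt_lt' (by norm_num)]; norm_num
      _ ≤ _ := by rw [div_le_iff₀ (by norm_num)]; linarith

end CycleTuran

/-- For `1 ≤ ℓ < t` (and `n` large enough that the graphs are defined),
`λ(C_{2t+1}(T_{n-2t,2})) < λ(C_{2ℓ+1}(T_{n-2ℓ,2}))`. -/
theorem cycleTuran_specRad_strict_anti {n ℓ t : ℕ} (hℓ : 1 ≤ ℓ) (hlt : ℓ < t)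
    (hn : 2 * t + 2 ≤ n) :
    specRad (cycleTuran n t) < specRad (cycleTuran n ℓ) := by
  obtain ⟨s, hs, rfl⟩ : ∃ s, 1 ≤ s ∧ t = ℓ + s := ⟨t - ℓ, by omega, by omega⟩
  set a := (n - 2 * (ℓ + s)) / 2
  set b := n - 2 * (ℓ + s) - a
  calc specRad (cycleTuran n (ℓ + s)) ≤ √(a * b + 4) :=
        specRad_cycleTuran_le (by omega) (by omega) (by omega) (by omega) (by omega)
    _ < specRad (cycleTuran n ℓ) :=
        sqrt_lt_specRad_cycleTuran (by omega) hℓ hs (by omega) (by omega) (by omega)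
end

section
/- If G is a C_{2k+1}-free graph on n vertices with m edges, then the number of triangles in G is at most (2/3)·k·m. -/
/-!
Fix a vertex `v`. A path on `2k` vertices inside `N(v)` closes up through `v` into a cycle of
length `2k + 1`, so paths in `N(v)` have at most `2k - 1` vertices and, by the Erdős–Gallai
theorem, `N(v)` spans at most `(k - 1) d(v)` edges. Summing over `v` counts every triangle three
times: `3 t ≤ (k - 1) ∑ d(v) = 2 (k - 1) m`.

Erdős–Gallai (all paths in `s` have at most `M` vertices, so `2 e(s) ≤ (M - 1) |s|`) goes by
induction on `|s|`. A vertex of degree at most `(M - 1) / 2` can be deleted. Otherwise take a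
longest path `P`, on `L ≤ M` vertices. Its ends have all their neighbours on `P` and their degrees
add up to at least `L`, so some consecutive pair `x, y` of `P` has `x` adjacent to the last vertex
and `y` to the first (Pósa); rerouting through these two edges gives a cycle on `V(P)`. An edge
leaving `V(P)` would extend a rotation of this cycle to a longer path, so `V(P)` splits off,
spanning at most `(L - 1) L / 2` edges.
-/

open Finset

namespace List

theorem exists_eq_append_cons_cons_of_length_le_countP {α : Type*} (P Q : α → Bool) :
    ∀ l : List α, l ≠ [] → l.length ≤ l.tail.countP P + l.dropLast.countP Q →
      ∃ p x y q, l = p ++ x :: y :: q ∧ Q x ∧ P y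
  | [], h, _ => (h rfl).elim
  | [_], _, h => by simp at h
  | x :: y :: l, _, h => by
    by_cases hxy : Q x ∧ P y
    · exact ⟨[], x, y, l, rfl, hxy⟩
    · have h' : (y :: l).length ≤ (y :: l).tail.countP P + (y :: l).dropLast.countP Q := by
        simp only [tail_cons, dropLast_cons_cons, length_cons, countP_cons] at h ⊢
        grind
      obtain ⟨p, x', y', q, hl, hx, hy⟩ :=
        exists_eq_append_cons_cons_of_length_le_countP P Q (y :: l) (cons_ne_nil y l) h'
      exact ⟨x :: p, x', y', q, by rw [hl, cons_append], hx, hy⟩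

end List

namespace SimpleGraph

variable {V : Type*} (G : SimpleGraph V)

structure IsPathIn (s : Finset V) (l : List V) : Prop where
  isChain : l.IsChain G.Adj
  nodup : l.Nodup
  mem : ∀ x ∈ l, x ∈ s

structure IsLongestPathIn (s : Finset V) (l : List V) : Prop extends G.IsPathIn s l where
  length_le : ∀ l', G.IsPathIn s l' → l'.length ≤ l.length

variable {G} {s t : Finset V} {l : List V} {a u w x y : V}

namespace IsPathIn

lemma mono (h : G.IsPathIn s l) (hst : s ⊆ t) : G.IsPathIn t l :=
  ⟨h.isChain, h.nodup, fun x hx => hst (h.mem x hx)⟩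

lemma reverse (h : G.IsPathIn s l) : G.IsPathIn s l.reverse :=
  ⟨List.isChain_reverse.2 (h.isChain.imp fun _ _ hab => hab.symm), List.nodup_reverse.2 h.nodup,
    fun x hx => h.mem x (List.mem_reverse.1 hx)⟩

lemma cons (h : G.IsPathIn s (a :: l)) (hw : w ∈ s) (hwl : w ∉ a :: l) (hwa : G.Adj w a) :
    G.IsPathIn s (w :: a :: l) :=
  ⟨h.isChain.cons_cons hwa, List.nodup_cons.2 ⟨hwl, h.nodup⟩,
    List.forall_mem_cons.2 ⟨hw, h.mem⟩⟩

end IsPathIn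

lemma exists_isLongestPathIn {M : ℕ} (hM : ∀ l, G.IsPathIn s l → l.length ≤ M) :
    ∃ l, G.IsLongestPathIn s l := by
  classical
  let P n := ∃ l, G.IsPathIn s l ∧ l.length = n
  have hP : P 0 := ⟨[], ⟨List.IsChain.nil, List.nodup_nil, by simp⟩, rfl⟩
  obtain ⟨l, hl, hlen⟩ := Nat.findGreatest_spec (Nat.zero_le M) hP
  exact ⟨l, hl, fun l' hl' => hlen ▸ Nat.le_findGreatest (hM l' hl') ⟨l', hl', rfl⟩⟩

lemma cycleChain_of_adj_head_of_adj_getLast {p q : List V}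
    (h : (p ++ x :: y :: q).IsChain G.Adj)
    (hy : ∀ a ∈ (p ++ x :: y :: q).head?, G.Adj y a)
    (hx : ∀ b ∈ (p ++ x :: y :: q).getLast?, G.Adj x b) :
    Cycle.Chain G.Adj (p ++ x :: (y :: q).reverse : List V) := by
  obtain ⟨hpx, -, hyq⟩ := List.isChain_append_cons_cons.1 h
  have hrot : (p ++ x :: (y :: q).reverse : Cycle V) = (y :: (p ++ x :: q.reverse) : List V) :=
    Cycle.coe_eq_coe.2 <| by
      simpa using List.isRotated_append (l := p ++ x :: q.reverse) (l' := [y])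
  rw [hrot, Cycle.chain_coe_cons,
    show p ++ x :: q.reverse ++ [y] = (p ++ [x]) ++ (y :: q).reverse by simp,
    List.isChain_cons, List.isChain_append]
  refine ⟨?_, hpx, List.isChain_reverse.2 (hyq.imp fun _ _ h => h.symm), ?_⟩
  · intro a ha
    apply hy
    cases p <;> simpa using ha
  · intro x' hx' b hb
    rw [List.getLast?_concat, Option.mem_some_iff] at hx'
    subst hx'
    apply hx
    simpa [List.head?_reverse, List.getLast?_append, List.getLast?_cons] using hb

lemma exists_isPathIn_length_eq_succ {r : List V} (hc : Cycle.Chain G.Adj (r : Cycle V))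
    (hnd : r.Nodup) (hrs : ∀ x ∈ r, x ∈ s) (hy : y ∈ r) (hw : w ∈ s) (hwr : w ∉ r)
    (hyw : G.Adj y w) : ∃ l, G.IsPathIn s l ∧ l.length = r.length + 1 := by
  obtain ⟨r₁, r₂, rfl⟩ := List.append_of_mem hy
  have hrot : (r₁ ++ y :: r₂ : Cycle V) = (y :: (r₂ ++ r₁) : List V) :=
    Cycle.coe_eq_coe.2 (by simpa using List.isRotated_append (l := r₁) (l' := y :: r₂))
  have hperm : (y :: (r₂ ++ r₁)).Perm (r₁ ++ y :: r₂) :=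
    (List.perm_append_comm.cons y).trans List.perm_middle.symm
  rw [hrot, Cycle.chain_coe_cons, ← List.cons_append] at hc
  refine ⟨w :: y :: (r₂ ++ r₁),
    ⟨(List.isChain_append.1 hc).1.cons_cons hyw.symm, ?_, ?_⟩, ?_⟩
  · exact List.nodup_cons.2 ⟨fun h => hwr (hperm.subset h), hperm.nodup_iff.2 hnd⟩
  · exact List.forall_mem_cons.2 ⟨hw, fun z hz => hrs z (hperm.subset hz)⟩
  · simp only [List.length_cons, List.length_append]
    omega

namespace IsLongestPathIn

lemma reverse (h : G.IsLongestPathIn s l) : G.IsLongestPathIn s l.reverse :=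
  ⟨h.toIsPathIn.reverse, fun l' hl' => by simpa using h.length_le l' hl'⟩

lemma mem_of_adj_head (h : G.IsLongestPathIn s (a :: l)) (hw : w ∈ s) (haw : G.Adj a w) :
    w ∈ a :: l := by
  by_contra hwl
  simpa using h.length_le _ (h.cons hw hwl haw.symm)

variable [DecidableEq V] [DecidableRel G.Adj]

lemma card_filter_adj_head_le (h : G.IsLongestPathIn s (a :: l)) :
    #{w ∈ s | G.Adj a w} ≤ l.countP (G.Adj a ·) :=
  calc #{w ∈ s | G.Adj a w} ≤ #(l.filter (G.Adj a ·)).toFinset := by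
        refine card_le_card fun w hw => ?_
        rw [mem_filter] at hw
        have := h.mem_of_adj_head hw.1 hw.2
        simp_all [hw.2.ne']
    _ ≤ (l.filter (G.Adj a ·)).length := List.toFinset_card_le _
    _ = l.countP (G.Adj a ·) := List.countP_eq_length_filter.symm

lemma mem_of_adj (h : G.IsLongestPathIn s l)
    (hdeg : ∀ v ∈ s, l.length ≤ 2 * #{w ∈ s | G.Adj v w})
    (hu : u ∈ l) (hw : w ∈ s) (huw : G.Adj u w) : w ∈ l := by
  obtain ⟨a, t, rfl⟩ := List.exists_cons_of_ne_nil (List.ne_nil_of_mem hu)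
  obtain ⟨t', b, hb⟩ := (List.eq_nil_or_concat (a :: t)).resolve_left (List.cons_ne_nil a t)
  rw [List.concat_eq_append] at hb
  have hdl : (a :: t).dropLast = t' := by rw [hb, List.dropLast_concat]
  have hdega := h.card_filter_adj_head_le
  have hdegb : #{w ∈ s | G.Adj b w} ≤ t'.countP (G.Adj b ·) := by
    have hrev : G.IsLongestPathIn s (b :: t'.reverse) := by simpa [hb] using h.reverse
    simpa [List.countP_reverse] using hrev.card_filter_adj_head_le
  have hlen : (a :: t).length ≤
      (a :: t).tail.countP (G.Adj a ·) + (a :: t).dropLast.countP (G.Adj b ·) := by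
    have := hdeg a (h.mem a List.mem_cons_self)
    have := hdeg b (h.mem b (by simp [hb]))
    rw [List.tail_cons, hdl]
    omega
  obtain ⟨p, x, y, q, hl, hbx, hay⟩ :=
    List.exists_eq_append_cons_cons_of_length_le_countP _ _ (a :: t) (List.cons_ne_nil a t) hlen
  simp only [decide_eq_true_eq] at hbx hay
  have hperm : (p ++ x :: (y :: q).reverse).Perm (a :: t) :=
    hl ▸ ((List.reverse_perm _).cons x).append_left p
  have hcyc := cycleChain_of_adj_head_of_adj_getLast (hl ▸ h.isChain)
    (by rw [← hl]; simpa using hay.symm) (by rw [← hl, hb]; simpa using hbx.symm)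
  by_contra hwl
  obtain ⟨l', hl', hlen'⟩ := exists_isPathIn_length_eq_succ hcyc (hperm.nodup_iff.2 h.nodup)
    (fun z hz => h.mem z (hperm.subset hz)) (hperm.mem_iff.2 hu) hw
    (fun hw' => hwl (hperm.subset hw')) huw
  have := h.length_le l' hl'
  rw [hperm.length_eq] at hlen'
  omega

end IsLongestPathIn

section EdgeCount

variable [DecidableEq V] [DecidableRel G.Adj] {v : V}

lemma sum_card_filter_adj_union (hst : Disjoint s t) :
    ∑ u ∈ s ∪ t, #{w ∈ s ∪ t | G.Adj u w} =
      ∑ u ∈ s, #{w ∈ s | G.Adj u w} + ∑ u ∈ t, #{w ∈ t | G.Adj u w} +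
        2 * ∑ u ∈ s, #{w ∈ t | G.Adj u w} := by
  have hsymm : ∑ u ∈ t, #{w ∈ s | G.Adj u w} = ∑ u ∈ s, #{w ∈ t | G.Adj u w} := by
    simpa [bipartiteAbove, bipartiteBelow, G.adj_comm] using
      sum_card_bipartiteAbove_eq_sum_card_bipartiteBelow (s := t) (t := s) (r := G.Adj)
  simp_rw [filter_union, card_union_of_disjoint (disjoint_filter_filter hst), sum_union hst,
    sum_add_distrib, hsymm]
  ring

lemma sum_card_filter_adj_erase (hv : v ∈ s) :
    ∑ u ∈ s, #{w ∈ s | G.Adj u w} =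
      ∑ u ∈ s.erase v, #{w ∈ s.erase v | G.Adj u w} + 2 * #{w ∈ s | G.Adj v w} := by
  have hsplit := sum_card_filter_adj_union (G := G) (disjoint_singleton_left.2 (s.notMem_erase v))
  rw [← insert_eq, insert_erase hv] at hsplit
  have hcross : {w ∈ s.erase v | G.Adj v w} = {w ∈ s | G.Adj v w} := by
    rw [filter_erase, erase_eq_of_notMem (by simp)]
  rw [hsplit, sum_singleton, sum_singleton, hcross, filter_singleton, if_neg (G.irrefl),
    card_empty, zero_add]

lemma sum_card_filter_adj_eq_of_forall_adj_mem {C : Finset V} (hCs : C ⊆ s)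
    (hC : ∀ u ∈ C, ∀ w ∈ s, G.Adj u w → w ∈ C) :
    ∑ u ∈ s, #{w ∈ s | G.Adj u w} =
      ∑ u ∈ C, #{w ∈ C | G.Adj u w} + ∑ u ∈ s \ C, #{w ∈ s \ C | G.Adj u w} := by
  have hsplit := sum_card_filter_adj_union (G := G) (disjoint_sdiff : Disjoint C (s \ C))
  rw [union_sdiff_of_subset hCs] at hsplit
  rw [hsplit, sum_eq_zero fun u hu => card_eq_zero.2 (filter_eq_empty_iff.2 fun w hw huw =>
    (mem_sdiff.1 hw).2 (hC u hu w (mem_sdiff.1 hw).1 huw)), mul_zero, add_zero]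

lemma sum_card_filter_adj_le_card_sub_one_mul (s : Finset V) :
    ∑ u ∈ s, #{w ∈ s | G.Adj u w} ≤ (#s - 1) * #s := by
  refine (sum_le_card_nsmul _ _ (#s - 1) fun u hu => ?_).trans (by rw [smul_eq_mul, mul_comm])
  rw [← card_erase_of_mem hu]
  exact card_le_card fun w hw => mem_erase.2 ⟨(mem_filter.1 hw).2.ne', (mem_filter.1 hw).1⟩

variable (G) in
/-- Erdős–Gallai; the sum counts every edge inside `s` twice. -/
theorem sum_card_filter_adj_le_of_isPathIn (M : ℕ) (s : Finset V)
    (hM : ∀ l, G.IsPathIn s l → l.length ≤ M) :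
    ∑ u ∈ s, #{w ∈ s | G.Adj u w} ≤ (M - 1) * #s := by
  induction s using Finset.strongInduction with
  | H s ih =>
  by_cases hlow : ∃ v ∈ s, 2 * #{w ∈ s | G.Adj v w} ≤ M - 1
  · obtain ⟨v, hv, hdeg⟩ := hlow
    have hrest := ih (s.erase v) (erase_ssubset hv) fun l hl => hM l (hl.mono (erase_subset v s))
    rw [sum_card_filter_adj_erase hv, ← card_erase_add_one hv, mul_add_one]
    lia
  · simp only [not_exists, not_and, not_le] at hlow
    rcases s.eq_empty_or_nonempty with rfl | ⟨v, hv⟩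
    · simp
    obtain ⟨l, hl⟩ := exists_isLongestPathIn hM
    have hCs : l.toFinset ⊆ s := fun x hx => hl.mem x (List.mem_toFinset.1 hx)
    have hCne : l.toFinset.Nonempty := by
      have := hl.length_le [v] ⟨List.isChain_singleton v, List.nodup_singleton v, by simpa⟩
      exact List.toFinset_nonempty_iff l |>.2 (List.ne_nil_of_length_pos this)
    have hlM := hM l hl.toIsPathIn
    have hCM : #l.toFinset ≤ M := (List.toFinset_card_le l).trans hlM
    have hclosed : ∀ u ∈ l.toFinset, ∀ w ∈ s, G.Adj u w → w ∈ l.toFinset := by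
      simp only [List.mem_toFinset]
      exact fun u hu w hw huw => hl.mem_of_adj (fun x hx => by have := hlow x hx; lia) hu hw huw
    have hC := sum_card_filter_adj_le_card_sub_one_mul (G := G) l.toFinset
    have hrest := ih _ (sdiff_ssubset hCs hCne) fun l hl => hM l (hl.mono sdiff_subset)
    rw [sum_card_filter_adj_eq_of_forall_adj_mem hCs hclosed, ← card_sdiff_add_card_eq_card hCs]
    have : (#l.toFinset - 1) * #l.toFinset ≤ (M - 1) * #l.toFinset := by gcongr
    lia

end EdgeCount

section Cycles

variable {v : V}

lemma hasCycle_of_isChain_of_forall_adj (hl : l.IsChain G.Adj) (hnd : l.Nodup)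
    (hv : ∀ x ∈ l, G.Adj v x) (h2 : 2 ≤ l.length) : hasCycle G (l.length + 1) := by
  have hvl : v ∉ l := fun h => (hv v h).ne rfl
  have hchain : (v :: (l ++ [v])).IsChain G.Adj := by
    rw [List.isChain_cons, List.isChain_append]
    refine ⟨fun x hx => hv x ?_, hl, List.isChain_singleton v, fun x hx y hy => ?_⟩
    · cases l <;> simp_all
    · simp only [List.head?_cons, Option.mem_some_iff] at hy
      exact hy ▸ (hv x (List.mem_of_getLast? hx)).symm
  obtain ⟨c, hc⟩ : ∃ c : G.Walk v v, c.support = v :: (l ++ [v]) :=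
    ⟨(Walk.ofSupport _ (List.cons_ne_nil _ _) hchain).copy List.head_cons (by simp),
      by rw [Walk.support_copy, Walk.support_ofSupport]⟩
  have hlen : c.length = l.length + 1 := by
    have := c.length_support
    simp only [hc, List.length_cons, List.length_append, List.length_nil] at this
    omega
  have hnil : ¬ c.Nil := by rw [← Walk.length_eq_zero_iff]; omega
  refine ⟨v, c, Walk.isCycle_iff_isPath_tail_and_le_length.2 ⟨?_, by omega⟩, hlen⟩
  rw [Walk.isPath_def, Walk.support_tail_of_not_nil _ hnil, hc, List.tail_cons]
  refine List.nodup_append.2 ⟨hnd, List.nodup_singleton v, fun x hx y hy => ?_⟩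
  rw [List.mem_singleton.1 hy]
  exact ne_of_mem_of_not_mem hx hvl

variable [Fintype V] [DecidableRel G.Adj]

lemma length_le_of_isPathIn_neighborFinset {k : ℕ} (hk : 1 ≤ k)
    (hfree : ¬ hasCycle G (2 * k + 1)) (hl : G.IsPathIn (G.neighborFinset v) l) :
    l.length ≤ 2 * k - 1 := by
  by_contra! hlong
  have hlen : (l.take (2 * k)).length = 2 * k := by
    rw [List.length_take]
    omega
  refine hfree (hlen ▸ hasCycle_of_isChain_of_forall_adj (v := v) (hl.isChain.take _)
    (hl.nodup.sublist (List.take_sublist _ _)) (fun x hx => ?_) (by omega))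
  simpa using hl.mem x (List.mem_of_mem_take hx)

end Cycles

section Triangles

variable [Fintype V] [DecidableEq V] [DecidableRel G.Adj] {v : V}

lemma card_filter_cliqueFinset_three_mem_mem (hvu : G.Adj v u) :
    #{t ∈ G.cliqueFinset 3 | v ∈ t ∧ u ∈ t} = #{w ∈ G.neighborFinset v | G.Adj u w} := by
  symm
  refine card_bij (fun w _ => {v, u, w}) (fun w hw => ?_) (fun w₁ hw₁ w₂ hw₂ heq => ?_)
    (fun t ht => ?_)
  · simp only [mem_filter, mem_neighborFinset] at hw
    simp [is3Clique_triple_iff, hvu, hw]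
  · simp only [mem_filter, mem_neighborFinset] at hw₁ hw₂
    have : w₁ ∈ ({v, u, w₂} : Finset V) := heq ▸ by simp
    simp only [mem_insert, mem_singleton] at this
    rcases this with rfl | rfl | rfl
    exacts [(hw₁.1.ne rfl).elim, (hw₁.2.ne rfl).elim, rfl]
  · simp only [mem_filter, mem_cliqueFinset_iff] at ht
    obtain ⟨ht3, hvt, hut⟩ := ht
    have hu' : u ∈ t.erase v := mem_erase.2 ⟨hvu.ne', hut⟩
    obtain ⟨w, hw⟩ := card_eq_one.1 (by
      rw [card_erase_of_mem hu', card_erase_of_mem hvt, ht3.card_eq] :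
        #((t.erase v).erase u) = 1)
    have hwt : w ∈ (t.erase v).erase u := hw ▸ mem_singleton_self w
    simp only [mem_erase] at hwt
    refine ⟨w, ?_, by rw [← hw, insert_erase hu', insert_erase hvt]⟩
    simp [ht3.isClique hvt hwt.2.2 hwt.2.1.symm, ht3.isClique hut hwt.2.2 hwt.1.symm]

lemma sum_card_filter_adj_neighborFinset (v : V) :
    ∑ u ∈ G.neighborFinset v, #{w ∈ G.neighborFinset v | G.Adj u w} =
      2 * #{t ∈ G.cliqueFinset 3 | v ∈ t} := by
  calc ∑ u ∈ G.neighborFinset v, #{w ∈ G.neighborFinset v | G.Adj u w}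
      = ∑ u ∈ G.neighborFinset v, #{t ∈ {t ∈ G.cliqueFinset 3 | v ∈ t} | u ∈ t} := by
        refine sum_congr rfl fun u hu => ?_
        rw [← card_filter_cliqueFinset_three_mem_mem ((mem_neighborFinset ..).1 hu),
          filter_filter]
    _ = ∑ t ∈ {t ∈ G.cliqueFinset 3 | v ∈ t}, #{u ∈ G.neighborFinset v | u ∈ t} :=
        sum_card_bipartiteAbove_eq_sum_card_bipartiteBelow _
    _ = ∑ t ∈ {t ∈ G.cliqueFinset 3 | v ∈ t}, 2 := by
        refine sum_congr rfl fun t ht => ?_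
        simp only [mem_filter, mem_cliqueFinset_iff] at ht
        have : {u ∈ G.neighborFinset v | u ∈ t} = t.erase v := by
          ext u
          simp only [mem_filter, mem_neighborFinset, mem_erase]
          exact ⟨fun h => ⟨h.1.ne', h.2⟩,
            fun h => ⟨ht.1.isClique ht.2 h.2 h.1.symm, h.2⟩⟩
        rw [this, card_erase_of_mem ht.2, ht.1.card_eq]
    _ = 2 * #{t ∈ G.cliqueFinset 3 | v ∈ t} := by rw [sum_const, smul_eq_mul, mul_comm]

lemma sum_card_filter_mem_cliqueFinset_three :
    ∑ v, #{t ∈ G.cliqueFinset 3 | v ∈ t} = 3 * #(G.cliqueFinset 3) := by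
  calc ∑ v, #{t ∈ G.cliqueFinset 3 | v ∈ t}
      = ∑ t ∈ G.cliqueFinset 3, #{v ∈ univ | v ∈ t} :=
        sum_card_bipartiteAbove_eq_sum_card_bipartiteBelow _
    _ = 3 * #(G.cliqueFinset 3) := by
        rw [sum_const_nat fun t ht => ?_, mul_comm]
        simpa using ((mem_cliqueFinset_iff ..).1 ht).card_eq

end Triangles

end SimpleGraph

/-- A `C_{2k+1}`-free graph with `m` edges has at most `(2/3)·k·m` triangles. -/
theorem triangle_count_C2k1_free {n k : ℕ} (hk : 2 ≤ k)
    (G : SimpleGraph (Fin n)) [DecidableRel G.Adj]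
    (hfree : ¬ hasCycle G (2 * k + 1)) :
    ((G.cliqueFinset 3).card : ℝ) ≤ 2 / 3 * (k : ℝ) * (G.edgeFinset.card : ℝ) := by
  have hlocal (v : Fin n) :
      ∑ u ∈ G.neighborFinset v, #{w ∈ G.neighborFinset v | G.Adj u w} ≤
        (2 * k - 2) * G.degree v :=
    G.sum_card_filter_adj_le_of_isPathIn (2 * k - 1) _ fun _ hl =>
      SimpleGraph.length_le_of_isPathIn_neighborFinset (by omega) hfree hl
  have hcount : 6 * #(G.cliqueFinset 3) ≤ 4 * k * #G.edgeFinset :=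
    calc 6 * #(G.cliqueFinset 3) = ∑ v, 2 * #{t ∈ G.cliqueFinset 3 | v ∈ t} := by
          rw [← mul_sum, G.sum_card_filter_mem_cliqueFinset_three]; ring
      _ = ∑ v, ∑ u ∈ G.neighborFinset v, #{w ∈ G.neighborFinset v | G.Adj u w} := by
          simp_rw [G.sum_card_filter_adj_neighborFinset]
      _ ≤ ∑ v, (2 * k - 2) * G.degree v := sum_le_sum fun v _ => hlocal v
      _ = (2 * k - 2) * (2 * #G.edgeFinset) := by
          rw [← mul_sum, G.sum_degrees_eq_twice_card_edges]
      _ ≤ 2 * k * (2 * #G.edgeFinset) := Nat.mul_le_mul_right _ (Nat.sub_le _ _)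
      _ = 4 * k * #G.edgeFinset := by ring
  have : (6 : ℝ) * #(G.cliqueFinset 3) ≤ 4 * k * #G.edgeFinset := by exact_mod_cast hcount
  linarith
end
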